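/- (Noiseless recovery under RIP.) There exists a constant C₀ > 0, depending only on δ_{2k}, with the following property. Let Φ be an n × N real matrix satisfying the Restricted Isometry Property of order 2k with constant δ_{2k} < √2 − 1, let x ∈ ℝ^N, and let y = Φx. Then any solution x* of the ℓ₁-minimization problem min ‖z‖₁ subject to Φz = y satisfies ‖x* − x‖₁ ≤ C₀ ‖x − x_{(k)}‖₁ and ‖x* − x‖₂ ≤ C₀ k^{−1/2} ‖x − x_{(k)}‖₁, where x_{(k)} is obtained from x by setting all but the k largest-in-magnitude entries to zero. In particular, if x is k-sparse, the recovery is exact: x* = x. -/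

import Mathlib

/-!
Let `h = x* - x`, so `Φ h = 0`, and let `S` carry the `k` largest entries of `x`. Minimality of
`‖x*‖₁` gives the cone condition `‖h_{Sᶜ}‖₁ ≤ ‖h_S‖₁ + 2 ‖x - x_(k)‖₁`. Cut `h_{Sᶜ}` into blocks
`T₁, T₂, …` of `k` entries in order of decreasing `|h i|`: every entry of `T_{j+1}` is at most
the mean of `T_j`, so `∑_{j ≥ 2} ‖h_{T_j}‖₂ ≤ k^{-1/2} ‖h_{Sᶜ}‖₁`. Since
`Φ h_{S ∪ T₁} = -∑_{j ≥ 2} Φ h_{T_j}`, restricted orthogonality `|Φu ⬝ Φv| ≤ δ ‖u‖₂ ‖v‖₂`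
(for disjointly supported `k`-sparse `u`, `v`) gives
`(1 - δ) ‖h_{S ∪ T₁}‖₂ ≤ √2 δ ∑_{j ≥ 2} ‖h_{T_j}‖₂`. This is the null space property `‖h_S‖₁ ≤ ρ ‖h_{Sᶜ}‖₁` with `ρ = √2 δ / (1 - δ) < 1`, and with the
cone condition it bounds both `‖h‖₁` and `√k ‖h‖₂` by `2 (1 + ρ) / (1 - ρ) · ‖x - x_(k)‖₁`.
-/

open Matrix

/-- The ℓ¹ norm on `ℝ^N`. -/
noncomputable def l1norm {N : ℕ} (x : Fin N → ℝ) : ℝ := ∑ i, |x i|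

/-- The ℓ² norm on `ℝ^N`. -/
noncomputable def l2norm {N : ℕ} (x : Fin N → ℝ) : ℝ := Real.sqrt (∑ i, x i ^ 2)

/-- A vector is `k`-sparse if it has at most `k` nonzero entries. -/
def Sparse {N : ℕ} (k : ℕ) (x : Fin N → ℝ) : Prop := {i | x i ≠ 0}.ncard ≤ k

/-- The Restricted Isometry Property of order `m` with constant `δ`. -/
def RIP {n N : ℕ} (Φ : Matrix (Fin n) (Fin N) ℝ) (m : ℕ) (δ : ℝ) : Prop :=
  ∀ x : Fin N → ℝ, Sparse m x →
    (1 - δ) * (∑ i, x i ^ 2) ≤ ∑ i, (Φ.mulVec x) i ^ 2 ∧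
    ∑ i, (Φ.mulVec x) i ^ 2 ≤ (1 + δ) * (∑ i, x i ^ 2)

/-- `xk` is obtained from `x` by setting all but the `k` largest-in-magnitude entries to zero. -/
def IsBestKTerm {N : ℕ} (k : ℕ) (x xk : Fin N → ℝ) : Prop :=
  ∃ S : Finset (Fin N), S.card = min k N ∧ (∀ i ∈ S, xk i = x i) ∧ (∀ i ∉ S, xk i = 0) ∧
    ∀ i ∈ S, ∀ j ∉ S, |x j| ≤ |x i|

open Finset Function

section Norms

variable {N : ℕ}

lemma l1norm_nonneg (u : Fin N → ℝ) : 0 ≤ l1norm u :=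
  sum_nonneg fun i _ => abs_nonneg (u i)

lemma l1norm_eq_zero {u : Fin N → ℝ} : l1norm u = 0 ↔ u = 0 := by
  simp [l1norm, sum_eq_zero_iff_of_nonneg, funext_iff]

lemma l1norm_eq_sum_add_sum_compl (u : Fin N → ℝ) (S : Finset (Fin N)) :
    l1norm u = ∑ i ∈ S, |u i| + ∑ i ∈ Sᶜ, |u i| :=
  (sum_add_sum_compl S _).symm

lemma l2norm_eq_norm (u : Fin N → ℝ) : l2norm u = ‖WithLp.toLp 2 u‖ := by
  simp [l2norm, EuclideanSpace.norm_eq]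

lemma l2norm_nonneg (u : Fin N → ℝ) : 0 ≤ l2norm u := Real.sqrt_nonneg _

lemma l2norm_sq (u : Fin N → ℝ) : l2norm u ^ 2 = ∑ i, u i ^ 2 :=
  Real.sq_sqrt (sum_nonneg fun i _ => sq_nonneg (u i))

lemma l2norm_eq_zero {u : Fin N → ℝ} : l2norm u = 0 ↔ u = 0 := by
  rw [l2norm_eq_norm, norm_eq_zero, WithLp.toLp_eq_zero]

lemma l2norm_smul (c : ℝ) (u : Fin N → ℝ) : l2norm (c • u) = |c| * l2norm u := by
  rw [l2norm_eq_norm, l2norm_eq_norm, WithLp.toLp_smul, norm_smul, Real.norm_eq_abs]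

lemma l2norm_neg (u : Fin N → ℝ) : l2norm (-u) = l2norm u := by
  rw [l2norm_eq_norm, l2norm_eq_norm, WithLp.toLp_neg, norm_neg]

lemma l2norm_add_le (u v : Fin N → ℝ) : l2norm (u + v) ≤ l2norm u + l2norm v := by
  simpa only [l2norm_eq_norm, WithLp.toLp_add] using norm_add_le _ _

lemma l2norm_sum_le {ι : Type*} (s : Finset ι) (u : ι → Fin N → ℝ) :
    l2norm (∑ j ∈ s, u j) ≤ ∑ j ∈ s, l2norm (u j) := by
  simpa only [l2norm_eq_norm, WithLp.toLp_sum] using norm_sum_le _ _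

lemma mul_eq_zero_of_disjoint_support {u v : Fin N → ℝ} (h : Disjoint (support u) (support v))
    (i : Fin N) : u i * v i = 0 := by
  have : (support fun i => u i * v i) = ∅ := by
    rw [support_mul, Set.disjoint_iff_inter_eq_empty.mp h]
  simpa using congrFun (support_eq_empty_iff.mp this) i

lemma l2norm_add_sq_of_disjoint {u v : Fin N → ℝ} (h : Disjoint (support u) (support v)) :
    l2norm (u + v) ^ 2 = l2norm u ^ 2 + l2norm v ^ 2 := by
  simp only [l2norm_sq, ← sum_add_distrib, Pi.add_apply]
  refine sum_congr rfl fun i _ => ?_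
  linear_combination 2 * mul_eq_zero_of_disjoint_support h i

lemma l2norm_le_l2norm_add_of_disjoint {u v : Fin N → ℝ} (h : Disjoint (support u) (support v)) :
    l2norm u ≤ l2norm (u + v) := by
  nlinarith [l2norm_add_sq_of_disjoint h, l2norm_nonneg u, l2norm_nonneg v, l2norm_nonneg (u + v)]

end Norms

section Sparsity

variable {N k l : ℕ} {u v : Fin N → ℝ}

lemma Sparse.of_support_subset (huv : support u ⊆ support v) (hv : Sparse k v) : Sparse k u :=
  (Set.ncard_le_ncard huv (Set.toFinite _)).trans hv

lemma sparse_of_support_subset_finset {s : Finset (Fin N)} (hu : support u ⊆ s) (hs : #s ≤ k) :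
    Sparse k u :=
  (Set.ncard_le_ncard hu (Set.toFinite _)).trans ((Set.ncard_coe_finset s).trans_le hs)

lemma Sparse.smul (c : ℝ) (hu : Sparse k u) : Sparse k (c • u) :=
  hu.of_support_subset (support_const_smul_subset c u)

lemma Sparse.add (hu : Sparse k u) (hv : Sparse l v) : Sparse (k + l) (u + v) :=
  (Set.ncard_le_ncard (support_add u v) (Set.toFinite _)).trans
    ((Set.ncard_union_le _ _).trans (add_le_add hu hv))

lemma Sparse.sub (hu : Sparse k u) (hv : Sparse l v) : Sparse (k + l) (u - v) :=
  (Set.ncard_le_ncard (support_sub u v) (Set.toFinite _)).trans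
    ((Set.ncard_union_le _ _).trans (add_le_add hu hv))

lemma Sparse.l1norm_le (hu : Sparse k u) : l1norm u ≤ √k * l2norm u := by
  set s : Finset (Fin N) := {i | u i ≠ 0}
  have hs : #s ≤ k := by
    rw [← Set.ncard_coe_finset, coe_filter_univ]
    exact hu
  have hsum : l1norm u = ∑ i ∈ s, |u i| :=
    (sum_subset (subset_univ s) fun i _ hi => by simpa [s] using hi).symm
  have hsq : ∑ i ∈ s, |u i| ^ 2 ≤ l2norm u ^ 2 := by
    simp only [sq_abs, l2norm_sq]
    exact sum_le_sum_of_subset_of_nonneg (subset_univ s) fun i _ _ => sq_nonneg (u i)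
  rw [hsum, ← Real.sqrt_sq (l2norm_nonneg u), ← Real.sqrt_mul (Nat.cast_nonneg k)]
  refine Real.le_sqrt_of_sq_le (sq_sum_le_card_mul_sum_sq.trans ?_)
  gcongr

end Sparsity

section RestrictedIsometry

variable {n N k : ℕ} {δ : ℝ} {Φ : Matrix (Fin n) (Fin N) ℝ}

lemma RIP.mul_l2norm_sq_le {m : ℕ} (hΦ : RIP Φ m δ) {u : Fin N → ℝ} (hu : Sparse m u) :
    (1 - δ) * l2norm u ^ 2 ≤ (Φ *ᵥ u) ⬝ᵥ (Φ *ᵥ u) := by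
  simpa only [l2norm_sq, dotProduct, ← sq] using (hΦ u hu).1

lemma RIP.le_mul_l2norm_sq {m : ℕ} (hΦ : RIP Φ m δ) {u : Fin N → ℝ} (hu : Sparse m u) :
    (Φ *ᵥ u) ⬝ᵥ (Φ *ᵥ u) ≤ (1 + δ) * l2norm u ^ 2 := by
  simpa only [l2norm_sq, dotProduct, ← sq] using (hΦ u hu).2

/-- Polarization: `4 (Φu ⬝ Φv) = ‖Φ(u + v)‖² - ‖Φ(u - v)‖²`, where `‖u ± v‖² = ‖u‖² + ‖v‖²`. -/
lemma RIP.abs_dotProduct_mulVec_le_half_add (hΦ : RIP Φ (2 * k) δ) {u v : Fin N → ℝ}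
    (hu : Sparse k u) (hv : Sparse k v) (huv : Disjoint (support u) (support v)) :
    |(Φ *ᵥ u) ⬝ᵥ (Φ *ᵥ v)| ≤ δ * (l2norm u ^ 2 + l2norm v ^ 2) / 2 := by
  have hpolar : (Φ *ᵥ (u + v)) ⬝ᵥ (Φ *ᵥ (u + v)) - (Φ *ᵥ (u - v)) ⬝ᵥ (Φ *ᵥ (u - v)) =
      4 * ((Φ *ᵥ u) ⬝ᵥ (Φ *ᵥ v)) := by
    simp only [mulVec_add, mulVec_sub, add_dotProduct, dotProduct_add, sub_dotProduct,
      dotProduct_sub, dotProduct_comm (Φ *ᵥ v) (Φ *ᵥ u)]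
    ring
  have hadd := l2norm_add_sq_of_disjoint huv
  have hsub : l2norm (u - v) ^ 2 = l2norm u ^ 2 + l2norm v ^ 2 := by
    rw [sub_eq_add_neg, l2norm_add_sq_of_disjoint (by rwa [support_neg]), l2norm_neg]
  have h₁ := hΦ.mul_l2norm_sq_le (two_mul k ▸ hu.add hv)
  have h₂ := hΦ.le_mul_l2norm_sq (two_mul k ▸ hu.add hv)
  have h₃ := hΦ.mul_l2norm_sq_le (two_mul k ▸ hu.sub hv)
  have h₄ := hΦ.le_mul_l2norm_sq (two_mul k ▸ hu.sub hv)
  rw [hadd] at h₁ h₂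
  rw [hsub] at h₃ h₄
  rw [abs_le]
  constructor <;> linarith

lemma RIP.abs_dotProduct_mulVec_le (hΦ : RIP Φ (2 * k) δ) {u v : Fin N → ℝ}
    (hu : Sparse k u) (hv : Sparse k v) (huv : Disjoint (support u) (support v)) :
    |(Φ *ᵥ u) ⬝ᵥ (Φ *ᵥ v)| ≤ δ * l2norm u * l2norm v := by
  rcases (l2norm_nonneg u).eq_or_lt with hu0 | hu0
  · rw [← hu0, l2norm_eq_zero.mp hu0.symm]
    simp
  rcases (l2norm_nonneg v).eq_or_lt with hv0 | hv0
  · rw [← hv0, l2norm_eq_zero.mp hv0.symm]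
    simp
  have hunit := hΦ.abs_dotProduct_mulVec_le_half_add (hu.smul (l2norm u)⁻¹)
    (hv.smul (l2norm v)⁻¹)
    (huv.mono (support_const_smul_subset _ _) (support_const_smul_subset _ _))
  rw [l2norm_smul, l2norm_smul, mulVec_smul, mulVec_smul, smul_dotProduct, dotProduct_smul,
    smul_eq_mul, smul_eq_mul, abs_mul, abs_mul, abs_inv, abs_inv, abs_of_pos hu0,
    abs_of_pos hv0, inv_mul_cancel₀ hu0.ne', inv_mul_cancel₀ hv0.ne', inv_mul_le_iff₀ hu0,
    inv_mul_le_iff₀ hv0] at hunit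
  linarith

/-- Expand `‖Φ(u + v)‖² = -∑ j, Φ(u + v) ⬝ Φ(w j)` and bound each term by restricted
orthogonality. -/
theorem RIP.mul_l2norm_add_le (hΦ : RIP Φ (2 * k) δ) (hδ : 0 ≤ δ) {u v : Fin N → ℝ}
    {ι : Type*} {s : Finset ι} {w : ι → Fin N → ℝ} (hu : Sparse k u) (hv : Sparse k v)
    (hw : ∀ j, Sparse k (w j)) (huv : Disjoint (support u) (support v))
    (huw : ∀ j, Disjoint (support u) (support (w j)))
    (hvw : ∀ j, Disjoint (support v) (support (w j)))
    (hker : Φ *ᵥ (u + v + ∑ j ∈ s, w j) = 0) :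
    (1 - δ) * l2norm (u + v) ≤ √2 * δ * ∑ j ∈ s, l2norm (w j) := by
  have hZ : 0 ≤ ∑ j ∈ s, l2norm (w j) := sum_nonneg fun j _ => l2norm_nonneg (w j)
  have hhead : Φ *ᵥ (u + v) = -∑ j ∈ s, Φ *ᵥ w j := by
    rw [mulVec_add _ (u + v), mulVec_sum] at hker
    exact eq_neg_of_add_eq_zero_left hker
  have hsplit : l2norm u + l2norm v ≤ √2 * l2norm (u + v) := by
    rw [← Real.sqrt_sq (l2norm_nonneg (u + v)), ← Real.sqrt_mul zero_le_two]
    refine Real.le_sqrt_of_sq_le ?_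
    rw [l2norm_add_sq_of_disjoint huv]
    nlinarith [sq_nonneg (l2norm u - l2norm v)]
  have hupper : (Φ *ᵥ (u + v)) ⬝ᵥ (Φ *ᵥ (u + v)) ≤
      √2 * δ * l2norm (u + v) * ∑ j ∈ s, l2norm (w j) :=
    calc (Φ *ᵥ (u + v)) ⬝ᵥ (Φ *ᵥ (u + v))
        = ∑ j ∈ s, -((Φ *ᵥ u) ⬝ᵥ (Φ *ᵥ w j) + (Φ *ᵥ v) ⬝ᵥ (Φ *ᵥ w j)) := by
          nth_rewrite 2 [hhead]
          simp only [dotProduct_neg, dotProduct_sum, mulVec_add, add_dotProduct, sum_neg_distrib]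
      _ ≤ ∑ j ∈ s, δ * (l2norm u + l2norm v) * l2norm (w j) := by
          gcongr with j
          have hu' := hΦ.abs_dotProduct_mulVec_le hu (hw j) (huw j)
          have hv' := hΦ.abs_dotProduct_mulVec_le hv (hw j) (hvw j)
          rw [abs_le] at hu' hv'
          linarith
      _ = δ * (∑ j ∈ s, l2norm (w j)) * (l2norm u + l2norm v) := by
          rw [← mul_sum]
          ring
      _ ≤ δ * (∑ j ∈ s, l2norm (w j)) * (√2 * l2norm (u + v)) :=
          mul_le_mul_of_nonneg_left hsplit (mul_nonneg hδ hZ)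
      _ = √2 * δ * l2norm (u + v) * ∑ j ∈ s, l2norm (w j) := by ring
  have hlower := hΦ.mul_l2norm_sq_le (two_mul k ▸ hu.add hv)
  rcases (l2norm_nonneg (u + v)).eq_or_lt with hP | hP
  · rw [← hP, mul_zero]
    positivity
  · nlinarith

end RestrictedIsometry

section Ranking

variable {ι : Type*}

lemma Finset.exists_rank_antitone [LinearOrder ι] {α : Type*} [LinearOrder α] (R : Finset ι)
    (a : ι → α) :
    ∃ r : ι → ℕ, Set.BijOn r R (range #R) ∧ ∀ i ∈ R, ∀ i' ∈ R, r i < r i' → a i' ≤ a i := by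
  let key : ι → αᵒᵈ ×ₗ ι := fun i => toLex (OrderDual.toDual (a i), i)
  have hkey : Injective key := fun i i' h => congrArg (fun p => (ofLex p).2) h
  let r : ι → ℕ := fun i => #{i' ∈ R | key i' < key i}
  have hmono : ∀ {i i'}, key i ≤ key i' → r i ≤ r i' := fun h =>
    card_le_card (monotone_filter_right R fun _ _ hj => hj.trans_le h)
  have hstrict : ∀ {i i'}, i ∈ R → key i < key i' → r i < r i' := fun hi h =>
    card_lt_card ⟨monotone_filter_right R fun _ _ hj => hj.trans h,
      fun hsub => lt_irrefl _ (mem_filter.1 (hsub (mem_filter.2 ⟨hi, h⟩))).2⟩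
  have hinj : Set.InjOn r R := fun i hi i' hi' h => hkey <| by
    rcases lt_trichotomy (key i) (key i') with hlt | heq | hgt
    · exact absurd h (hstrict hi hlt).ne
    · exact heq
    · exact absurd h (hstrict hi' hgt).ne'
  have hmaps : Set.MapsTo r R (range #R) := fun i hi =>
    mem_range.2 (card_lt_card (filter_ssubset.2 ⟨i, hi, lt_irrefl _⟩))
  have himage : R.image r = range #R :=
    eq_of_subset_of_card_le (image_subset_iff.2 hmaps)
      (by rw [card_image_of_injOn hinj, card_range])
  refine ⟨r, ⟨hmaps, hinj, by rw [Set.SurjOn, ← coe_image, himage]⟩, fun i hi i' hi' h => ?_⟩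
  have hlt : key i < key i' := lt_of_not_ge fun hle => (hmono hle).not_gt h
  rcases Prod.Lex.lt_iff.1 hlt with hlt | ⟨heq, -⟩
  · exact (OrderDual.toDual_lt_toDual.1 hlt).le
  · exact (OrderDual.toDual_inj.1 heq).ge

def rankBlock (R : Finset ι) (r : ι → ℕ) (k j : ℕ) : Finset ι := {i ∈ R | r i / k = j}

variable {R : Finset ι} {r : ι → ℕ} {k : ℕ}

lemma card_rankBlock_le (hr : Set.InjOn r R) (hk : 0 < k) (j : ℕ) :
    #(rankBlock R r k j) ≤ k :=
  calc #(rankBlock R r k j) ≤ #(Ico (j * k) (j * k + k)) :=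
        card_le_card_of_injOn r
          (fun i hi => by
            have := (Nat.div_eq_iff hk).1 (mem_filter.1 hi).2
            simp only [coe_Ico, Set.mem_Ico]
            omega)
          (hr.mono (filter_subset _ R))
    _ = k := by simp

lemma mul_le_sum_rankBlock (hr : Set.BijOn r R (range #R)) (hk : 0 < k) {a : ι → ℝ}
    (hanti : ∀ i ∈ R, ∀ i' ∈ R, r i < r i' → a i' ≤ a i) {j : ℕ} {i : ι}
    (hi : i ∈ rankBlock R r k (j + 1)) :
    k * a i ≤ ∑ i' ∈ rankBlock R r k j, a i' := by
  obtain ⟨hiR, hij⟩ := mem_filter.1 hi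
  have hri := (Nat.div_eq_iff hk).1 hij
  have hfull : Ico (j * k) (j * k + k) ⊆ (rankBlock R r k j).image r := by
    intro c hc
    obtain ⟨hc₁, hc₂⟩ := mem_Ico.1 hc
    have hcR : c < #R := by
      have := mem_range.1 (hr.mapsTo hiR)
      rw [add_mul] at hri
      omega
    obtain ⟨i', hi'R, rfl⟩ := hr.surjOn (mem_range.2 hcR)
    exact mem_image_of_mem r (mem_filter.2 ⟨hi'R, (Nat.div_eq_iff hk).2 ⟨hc₁, by omega⟩⟩)
  have hcard : #(rankBlock R r k j) = k :=
    (card_rankBlock_le hr.injOn hk j).antisymm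
      (by simpa using (card_le_card hfull).trans card_image_le)
  calc (k : ℝ) * a i = ∑ _i' ∈ rankBlock R r k j, a i := by simp [hcard]
    _ ≤ ∑ i' ∈ rankBlock R r k j, a i' := by
        refine sum_le_sum fun i' hi' => hanti i' (filter_subset _ R hi') i hiR ?_
        have := (Nat.div_eq_iff hk).1 (mem_filter.1 hi').2
        rw [add_mul] at hri
        omega

lemma sqrt_mul_sqrt_sum_sq_le_of_mul_le {s : Finset ι} {a : ι → ℝ} {M : ℝ} (hk : 0 < k)
    (hs : #s ≤ k) (ha : ∀ i ∈ s, 0 ≤ a i) (haM : ∀ i ∈ s, k * a i ≤ M) (hM : 0 ≤ M) :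
    √k * √(∑ i ∈ s, a i ^ 2) ≤ M := by
  rw [← Real.sqrt_mul (Nat.cast_nonneg k), Real.sqrt_le_iff]
  refine ⟨hM, le_of_mul_le_mul_left ?_ (Nat.cast_pos.2 hk : (0 : ℝ) < k)⟩
  calc (k : ℝ) * (k * ∑ i ∈ s, a i ^ 2) = ∑ i ∈ s, (k * a i) ^ 2 := by
        rw [mul_sum, mul_sum]
        exact sum_congr rfl fun i _ => by ring
    _ ≤ ∑ _i ∈ s, M ^ 2 :=
        sum_le_sum fun i hi =>
          pow_le_pow_left₀ (mul_nonneg (Nat.cast_nonneg k) (ha i hi)) (haM i hi) 2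
    _ ≤ k * M ^ 2 := by
        rw [sum_const, nsmul_eq_mul]
        gcongr

/-- Each entry of block `j + 1` is at most the mean of block `j`, so the `ℓ²` norm of block
`j + 1` is at most `k^{-1/2}` times the `ℓ¹` norm of block `j`. -/
theorem sqrt_mul_sum_sqrt_sum_sq_rankBlock_le (hr : Set.BijOn r R (range #R)) (hk : 0 < k)
    {a : ι → ℝ} (ha : ∀ i, 0 ≤ a i) (hanti : ∀ i ∈ R, ∀ i' ∈ R, r i < r i' → a i' ≤ a i)
    (B : ℕ) :
    √k * ∑ j ∈ range B, √(∑ i ∈ rankBlock R r k (j + 1), a i ^ 2) ≤ ∑ i ∈ R, a i :=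
  calc √k * ∑ j ∈ range B, √(∑ i ∈ rankBlock R r k (j + 1), a i ^ 2)
      ≤ ∑ j ∈ range B, ∑ i ∈ rankBlock R r k j, a i := by
        rw [mul_sum]
        exact sum_le_sum fun j _ => sqrt_mul_sqrt_sum_sq_le_of_mul_le hk
          (card_rankBlock_le hr.injOn hk _) (fun i _ => ha i)
          (fun i hi => mul_le_sum_rankBlock hr hk hanti hi) (sum_nonneg fun i _ => ha i)
    _ = ∑ i ∈ R with r i / k ∈ range B, a i := sum_fiberwise_eq_sum_filter R _ _ a
    _ ≤ ∑ i ∈ R, a i := sum_le_sum_of_subset_of_nonneg (filter_subset _ R) fun i _ _ => ha i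

end Ranking

section NullSpace

variable {n N k : ℕ}

/-- `g 0` is `h` on `S`, and `g 1, g 2, …` cut `h` on `Sᶜ` into blocks of `k` entries in order
of decreasing `|h i|`. -/
theorem exists_block_decomposition (hk : 0 < k) (h : Fin N → ℝ) {S : Finset (Fin N)}
    (hS : #S ≤ k) :
    ∃ (B : ℕ) (g : ℕ → Fin N → ℝ), h = g 0 + g 1 + ∑ j ∈ range B, g (j + 2) ∧
      (∀ j, Sparse k (g j)) ∧ Pairwise (fun j j' => Disjoint (support (g j)) (support (g j'))) ∧
      l1norm (g 0) = ∑ i ∈ S, |h i| ∧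
      √k * ∑ j ∈ range B, l2norm (g (j + 2)) ≤ ∑ i ∈ Sᶜ, |h i| := by
  obtain ⟨r, hr, hanti⟩ := Sᶜ.exists_rank_antitone fun i => |h i|
  let blk : Fin N → ℕ := fun i => if i ∈ S then 0 else r i / k + 1
  let g : ℕ → Fin N → ℝ := fun j i => if blk i = j then h i else 0
  have hblk0 : ({i | blk i = 0} : Finset (Fin N)) = S := by
    ext i
    by_cases hi : i ∈ S <;> simp [blk, hi]
  have hblk : ∀ j, ({i | blk i = j + 1} : Finset (Fin N)) = rankBlock Sᶜ r k j := by
    intro j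
    ext i
    by_cases hi : i ∈ S <;> simp [blk, rankBlock, hi]
  have hblk_lt : ∀ i, blk i < N + 2 := by
    intro i
    by_cases hi : i ∈ S
    · simp [blk, hi]
    · have hr_lt := mem_range.1 (hr.mapsTo (by simpa using hi))
      have := (card_le_univ Sᶜ).trans_eq (Fintype.card_fin N)
      have := Nat.div_le_self (r i) k
      simp only [blk, hi, if_false]
      omega
  have hsupp : ∀ j, support (g j) ⊆ ({i | blk i = j} : Finset (Fin N)) := by
    intro j i hi
    by_contra hij
    simp_all [g]
  have hsum_g : ∀ j (f : ℝ → ℝ), f 0 = 0 → ∑ i, f (g j i) = ∑ i with blk i = j, f (h i) := by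
    intro j f hf
    rw [sum_filter]
    exact sum_congr rfl fun i _ => by split_ifs <;> simp [g, *]
  refine ⟨N, g, ?_, fun j => ?_, fun j j' hjj' => ?_, ?_, ?_⟩
  · have hrange : ∑ j ∈ range (N + 2), g j = g 0 + g 1 + ∑ j ∈ range N, g (j + 2) := by
      rw [sum_range_succ', sum_range_succ']
      abel
    rw [← hrange]
    funext i
    simp [g, Finset.sum_apply, sum_ite_eq, hblk_lt i]
  · refine sparse_of_support_subset_finset (hsupp j) ?_
    rcases j with _ | j
    · rwa [hblk0]
    · rw [hblk]
      exact card_rankBlock_le hr.injOn hk j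
  · refine Set.disjoint_left.2 fun i hi hi' => hjj' ?_
    have := hsupp j hi
    have := hsupp j' hi'
    simp_all
  · rw [l1norm, hsum_g 0 _ abs_zero, hblk0]
  · calc √k * ∑ j ∈ range N, l2norm (g (j + 2))
        = √k * ∑ j ∈ range N, √(∑ i ∈ rankBlock Sᶜ r k (j + 1), |h i| ^ 2) := by
          simp only [l2norm, sq_abs]
          rw [sum_congr rfl fun j _ => by rw [hsum_g (j + 2) (· ^ 2) (zero_pow two_ne_zero), hblk]]
      _ ≤ ∑ i ∈ Sᶜ, |h i| :=
          sqrt_mul_sum_sqrt_sum_sq_rankBlock_le hr hk (fun i => abs_nonneg (h i)) hanti N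

theorem RIP.null_space_property {δ : ℝ} {Φ : Matrix (Fin n) (Fin N) ℝ} (hΦ : RIP Φ (2 * k) δ)
    (hδ₀ : 0 ≤ δ) (hδ₁ : δ < 1) (hk : 0 < k) {h : Fin N → ℝ} (hh : Φ *ᵥ h = 0)
    {S : Finset (Fin N)} (hS : #S ≤ k) :
    ∑ i ∈ S, |h i| ≤ √2 * δ / (1 - δ) * ∑ i ∈ Sᶜ, |h i| ∧
      √k * l2norm h ≤ (1 + √2 * δ / (1 - δ)) * ∑ i ∈ Sᶜ, |h i| := by
  obtain ⟨B, g, hsum, hsparse, hdisj, hg₀, htail⟩ := exists_block_decomposition hk h hS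
  set ρ := √2 * δ / (1 - δ)
  set Z := ∑ j ∈ range B, l2norm (g (j + 2))
  have hsk : 0 ≤ √(k : ℝ) := Real.sqrt_nonneg k
  have hρ : 0 ≤ ρ := div_nonneg (by positivity) (by linarith)
  have hhead : l2norm (g 0 + g 1) ≤ ρ * Z := by
    have := hΦ.mul_l2norm_add_le hδ₀ (hsparse 0) (hsparse 1) (fun j => hsparse (j + 2))
      (hdisj (by decide)) (fun j => hdisj (by omega)) (fun j => hdisj (by omega)) (hsum ▸ hh)
    rw [div_mul_eq_mul_div, le_div_iff₀ (by linarith)]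
    linarith
  have hhead' : √k * l2norm (g 0 + g 1) ≤ ρ * ∑ i ∈ Sᶜ, |h i| :=
    calc √k * l2norm (g 0 + g 1) ≤ ρ * (√k * Z) := by
          nlinarith [mul_le_mul_of_nonneg_left hhead hsk]
      _ ≤ _ := mul_le_mul_of_nonneg_left htail hρ
  constructor
  · calc ∑ i ∈ S, |h i| = l1norm (g 0) := hg₀.symm
      _ ≤ √k * l2norm (g 0) := (hsparse 0).l1norm_le
      _ ≤ √k * l2norm (g 0 + g 1) :=
          mul_le_mul_of_nonneg_left (l2norm_le_l2norm_add_of_disjoint (hdisj (by decide))) hsk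
      _ ≤ _ := hhead'
  · have htri : l2norm h ≤ l2norm (g 0 + g 1) + Z := by
      rw [hsum]
      exact (l2norm_add_le _ _).trans (by gcongr; exact l2norm_sum_le _ _)
    calc √k * l2norm h ≤ √k * l2norm (g 0 + g 1) + √k * Z := by
          rw [← mul_add]
          exact mul_le_mul_of_nonneg_left htri hsk
      _ ≤ _ := by linarith

end NullSpace

section L1Minimization

variable {N k : ℕ}

lemma sum_compl_abs_sub_le_of_l1norm_le {x z : Fin N → ℝ} (hz : l1norm z ≤ l1norm x)
    (S : Finset (Fin N)) :
    ∑ i ∈ Sᶜ, |(z - x) i| ≤ ∑ i ∈ S, |(z - x) i| + 2 * ∑ i ∈ Sᶜ, |x i| := by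
  have hS : ∑ i ∈ S, |x i| ≤ ∑ i ∈ S, |z i| + ∑ i ∈ S, |(z - x) i| := by
    rw [← sum_add_distrib]
    gcongr with i
    have := abs_sub_abs_le_abs_sub (x i) (z i)
    rw [abs_sub_comm] at this
    simp only [Pi.sub_apply]
    linarith
  have hSc : ∑ i ∈ Sᶜ, |(z - x) i| ≤ ∑ i ∈ Sᶜ, |z i| + ∑ i ∈ Sᶜ, |x i| := by
    rw [← sum_add_distrib]
    exact sum_le_sum fun i _ => abs_sub (z i) (x i)
  rw [l1norm_eq_sum_add_sum_compl z S, l1norm_eq_sum_add_sum_compl x S] at hz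
  linarith

lemma IsBestKTerm.exists_l1norm_sub_eq {x xk : Fin N → ℝ} (hxk : IsBestKTerm k x xk) :
    ∃ S : Finset (Fin N), #S ≤ k ∧ l1norm (x - xk) = ∑ i ∈ Sᶜ, |x i| := by
  obtain ⟨S, hcard, hin, hout, -⟩ := hxk
  refine ⟨S, hcard ▸ min_le_left k N, ?_⟩
  rw [l1norm_eq_sum_add_sum_compl _ S, sum_eq_zero fun i hi => by simp [hin i hi], zero_add]
  exact sum_congr rfl fun i hi => by simp [hout i (mem_compl.1 hi)]

lemma IsBestKTerm.eq_of_sparse {x xk : Fin N → ℝ} (hxk : IsBestKTerm k x xk)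
    (hx : Sparse k x) : xk = x := by
  obtain ⟨S, hcard, hin, hout, hdom⟩ := hxk
  funext i
  by_cases hi : i ∈ S
  · exact hin i hi
  rw [hout i hi, eq_comm]
  by_contra hxi
  -- Every entry kept in `S` is at least `|x i| > 0`, so `x` would have `#S + 1` nonzero entries.
  have hsupp : ↑(insert i S) ⊆ support x := by
    intro j hj
    rcases mem_insert.1 hj with rfl | hj
    · exact hxi
    · exact abs_pos.1 ((abs_pos.2 hxi).trans_le (hdom j hj i hi))
  have h₁ := (Set.ncard_coe_finset _ ▸ Set.ncard_le_ncard hsupp (Set.toFinite _)).trans hx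
  have h₂ := (card_le_univ (insert i S)).trans_eq (Fintype.card_fin N)
  rw [card_insert_of_notMem hi] at h₁ h₂
  omega

end L1Minimization

/-- Noiseless recovery under RIP: if `δ_{2k} < √2 - 1`, any ℓ¹-minimizer `x*` subject to
`Φ z = Φ x` satisfies `‖x* - x‖₁ ≤ C₀ ‖x - x_(k)‖₁` and
`‖x* - x‖₂ ≤ C₀ k^{-1/2} ‖x - x_(k)‖₁`, where `C₀` depends only on `δ_{2k}`;
in particular `k`-sparse signals are recovered exactly. -/
theorem noiseless_recovery_under_RIP (δ : ℝ) (hδpos : 0 < δ) (hδ : δ < Real.sqrt 2 - 1) :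
    ∃ C₀ : ℝ, 0 < C₀ ∧
      ∀ (n N k : ℕ), 0 < k →
        ∀ Φ : Matrix (Fin n) (Fin N) ℝ, RIP Φ (2 * k) δ →
          ∀ x xk xstar : Fin N → ℝ, IsBestKTerm k x xk →
            Φ.mulVec xstar = Φ.mulVec x →
            (∀ z : Fin N → ℝ, Φ.mulVec z = Φ.mulVec x → l1norm xstar ≤ l1norm z) →
            l1norm (xstar - x) ≤ C₀ * l1norm (x - xk) ∧
            l2norm (xstar - x) ≤ C₀ * (Real.sqrt k)⁻¹ * l1norm (x - xk) ∧
            (Sparse k x → xstar = x) := by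
  have hδ₁ : δ < 1 := by
    have : √2 < 2 := by norm_num [Real.sqrt_lt' two_pos]
    linarith
  set ρ := √2 * δ / (1 - δ) with hρ
  have hρ₀ : 0 ≤ ρ := div_nonneg (by positivity) (by linarith)
  have hρ₁ : ρ < 1 := by
    rw [div_lt_one (by linarith)]
    nlinarith [Real.sq_sqrt (zero_le_two : (0 : ℝ) ≤ 2)]
  refine ⟨2 * (1 + ρ) / (1 - ρ), div_pos (by linarith) (by linarith), ?_⟩
  intro n N k hk Φ hΦ x xk xstar hxk hfeas hmin
  obtain ⟨S, hS, he⟩ := hxk.exists_l1norm_sub_eq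
  obtain ⟨hnsp, hl2⟩ := hΦ.null_space_property hδpos.le hδ₁ hk (h := xstar - x)
    (by rw [mulVec_sub, hfeas, sub_self]) hS
  rw [← hρ] at hnsp hl2
  have hcone := sum_compl_abs_sub_le_of_l1norm_le (hmin x rfl) S
  have htail : (1 + ρ) * ∑ i ∈ Sᶜ, |(xstar - x) i| ≤ 2 * (1 + ρ) / (1 - ρ) * l1norm (x - xk) := by
    rw [he, div_mul_eq_mul_div, le_div_iff₀ (by linarith)]
    nlinarith
  have hl1 : l1norm (xstar - x) ≤ 2 * (1 + ρ) / (1 - ρ) * l1norm (x - xk) := by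
    rw [l1norm_eq_sum_add_sum_compl _ S]
    linarith
  refine ⟨hl1, ?_, fun hx => ?_⟩
  · rw [mul_right_comm, ← div_eq_mul_inv, le_div_iff₀' (Real.sqrt_pos.2 (Nat.cast_pos.2 hk))]
    linarith
  · rw [hxk.eq_of_sparse hx, sub_self, (l1norm_eq_zero.2 rfl), mul_zero] at hl1
    exact sub_eq_zero.1 (l1norm_eq_zero.1 (hl1.antisymm (l1norm_nonneg _)))
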